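/- Let N ≥ 2 and define R(x) = log₂(1 + N/x) + log₂ N + f₂(g(x)) for x > 0, where g(x) is the correct-detection probability P_c with noise variance x and f₂(p) = p log₂ p + (1-p) log₂((1-p)/(N-1)). Then R is convex on (0, ∞), and consequently for any positive random variable X, E[R(X)] ≥ R(E[X]). -/

import Mathlib

open Real MeasureTheory Finset

/-- The correct-detection probability as a function of the noise variance `x`. -/
noncomputable def gPc (N : ℕ) (x : ℝ) : ℝ :=
  (∑ r ∈ Finset.range (N - 1),
      ((N - 2).choose r : ℝ) * (-1) ^ r * ((r : ℝ) + ((N : ℝ) + 2 * x) / ((N : ℝ) + x))⁻¹) /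
  (∑ r ∈ Finset.range (N - 1), ((N - 2).choose r : ℝ) * (-1) ^ r * ((r : ℝ) + 1)⁻¹)

/-- The channel term `f₂` of the rate bound. -/
noncomputable def fTwo (N : ℕ) (p : ℝ) : ℝ :=
  p * Real.logb 2 p + (1 - p) * Real.logb 2 ((1 - p) / ((N : ℝ) - 1))

/-- The achievable-rate lower bound as a function of the effective noise variance. -/
noncomputable def Rate (N : ℕ) (x : ℝ) : ℝ :=
  Real.logb 2 (1 + (N : ℝ) / x) + Real.logb 2 (N : ℝ) + fTwo N (gPc N x)

/-!
The alternating binomial sums in `gPc` are iterated forward differences of `t ↦ t⁻¹`, so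
`P_c = (N-1)! / ∏_{j < N-1} (t + j)` with `t = (N + 2x)/(N + x)`, a concave function of `x` with
values in `(1, 2)`. A product of nonnegative, antitone, convex factors is convex and antitone, so
`P_c` is a convex function of `x` with values in `[1/N, 1]`. Moreover `f₂(p) = -H_N(1 - p) / log 2`
for the `N`-ary entropy `H_N`, which is concave and increasing on `[0, 1 - 1/N]`, and
`log₂ (1 + N/x) = -log₂ (t - 1)`; so each term of `R` is a convex antitone function of a concave
one. On the open half-line Jensen's inequality follows from the supporting line at the mean whose
slope is the right derivative there.
-/

open scoped Nat

theorem ConvexOn.comp_concaveOn_of_mapsTo {𝕜 E : Type*} [Field 𝕜] [LinearOrder 𝕜]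
    [IsStrictOrderedRing 𝕜] [AddCommGroup E] [Module 𝕜 E] {s : Set E} {t : Set 𝕜}
    {f : E → 𝕜} {g : 𝕜 → 𝕜} (hg : ConvexOn 𝕜 t g) (hf : ConcaveOn 𝕜 s f)
    (hg_anti : AntitoneOn g t) (hst : Set.MapsTo f s t) : ConvexOn 𝕜 s (g ∘ f) :=
  ⟨hf.1, fun _ hx _ hy _ _ ha hb hab =>
    (hg_anti (hg.1 (hst hx) (hst hy) ha hb hab) (hst (hf.1 hx hy ha hb hab))
      (hf.2 hx hy ha hb hab)).trans (hg.2 (hst hx) (hst hy) ha hb hab)⟩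

theorem ConvexOn.prod_of_nonneg_of_antitoneOn {ι 𝕜 : Type*} [CommRing 𝕜] [LinearOrder 𝕜]
    [IsStrictOrderedRing 𝕜] {s : Set 𝕜} {f : ι → 𝕜 → 𝕜} (u : Finset ι) (hs : Convex 𝕜 s)
    (hf : ∀ i ∈ u, ConvexOn 𝕜 s (f i)) (hf_anti : ∀ i ∈ u, AntitoneOn (f i) s)
    (hf_nonneg : ∀ i ∈ u, ∀ x ∈ s, 0 ≤ f i x) :
    ConvexOn 𝕜 s (fun x => ∏ i ∈ u, f i x) := by
  induction u using Finset.cons_induction with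
  | empty => simpa using convexOn_const (1 : 𝕜) hs
  | cons i u hi ih =>
    simp only [forall_mem_cons] at hf hf_anti hf_nonneg
    have hprod_anti : AntitoneOn (fun x => ∏ i ∈ u, f i x) s := fun x hx y hy hxy =>
      prod_le_prod (fun i hi => hf_nonneg.2 i hi y hy) (fun i hi => hf_anti.2 i hi hx hy hxy)
    have hmul := hf.1.mul (ih hf.2 hf_anti.2 hf_nonneg.2) hf_nonneg.1
      (fun x hx => prod_nonneg fun i hi => hf_nonneg.2 i hi x hx) (hf_anti.1.monovaryOn hprod_anti)
    exact hmul.congr fun x _ => by rw [prod_cons]; rfl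

theorem ConvexOn.add_rightDeriv_mul_sub_le {s : Set ℝ} {g : ℝ → ℝ} {x y : ℝ}
    (hg : ConvexOn ℝ s g) (hx : x ∈ interior s) (hy : y ∈ s) :
    g x + derivWithin g (Set.Ioi x) x * (y - x) ≤ g y := by
  rcases lt_trichotomy y x with hyx | rfl | hxy
  · have h := (hg.slope_le_leftDeriv_of_mem_interior hy hx hyx).trans
      (hg.leftDeriv_le_rightDeriv_of_mem_interior hx)
    rw [slope_def_field, div_le_iff₀ (sub_pos.2 hyx)] at h
    linarith
  · simp
  · have h := hg.rightDeriv_le_slope_of_mem_interior hx hy hxy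
    rw [slope_def_field, le_div_iff₀ (sub_pos.2 hxy)] at h
    linarith

theorem ConvexOn.map_integral_le_of_integral_mem_interior {Ω : Type*} [MeasurableSpace Ω]
    {μ : Measure Ω} [IsProbabilityMeasure μ] {s : Set ℝ} {g : ℝ → ℝ} {f : Ω → ℝ}
    (hg : ConvexOn ℝ s g) (hfs : ∀ᵐ ω ∂μ, f ω ∈ s) (hmean : ∫ ω, f ω ∂μ ∈ interior s)
    (hfi : Integrable f μ) (hgi : Integrable (fun ω => g (f ω)) μ) :
    g (∫ ω, f ω ∂μ) ≤ ∫ ω, g (f ω) ∂μ := by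
  set m := ∫ ω, f ω ∂μ
  set c := derivWithin g (Set.Ioi m) m
  have hdev : Integrable (fun ω => c * (f ω - m)) μ := (hfi.sub (integrable_const m)).const_mul c
  have hline : Integrable (fun ω => g m + c * (f ω - m)) μ := (integrable_const _).add hdev
  calc g m = ∫ ω, (g m + c * (f ω - m)) ∂μ := by
        rw [integral_add (integrable_const _) hdev, integral_const_mul,
          integral_sub hfi (integrable_const m)]
        simp [m]
    _ ≤ ∫ ω, g (f ω) ∂μ :=
        integral_mono_ae hline hgi (hfs.mono fun ω hω => hg.add_rightDeriv_mul_sub_le hmean hω)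

theorem integral_pos_of_ae_pos {Ω : Type*} [MeasurableSpace Ω] {μ : Measure Ω} [NeZero μ]
    {f : Ω → ℝ} (hf : ∀ᵐ ω ∂μ, 0 < f ω) (hfi : Integrable f μ) : 0 < ∫ ω, f ω ∂μ := by
  rw [integral_pos_iff_support_of_nonneg_ae (hf.mono fun _ h => h.le) hfi, pos_iff_ne_zero]
  intro h0
  obtain ⟨ω, hpos, hω⟩ := (hf.and (measure_eq_zero_iff_ae_notMem.mp h0)).exists
  exact hω hpos.ne'

theorem fwdDiff_iter_inv (n : ℕ) {t : ℝ} (ht : 0 < t) :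
    (fwdDiff 1)^[n] (fun x : ℝ => x⁻¹) t = (-1) ^ n * n ! * (∏ j ∈ range (n + 1), (t + j))⁻¹ := by
  induction n generalizing t with
  | zero => simp
  | succ n ih =>
    set R := ∏ j ∈ range (n + 2), (t + j)
    have hshift : (∏ j ∈ range (n + 1), (t + 1 + j))⁻¹ = t * R⁻¹ := by
      have : R = t * ∏ j ∈ range (n + 1), (t + 1 + j) := by
        simp only [R, prod_range_succ' _ (n + 1), Nat.cast_add, Nat.cast_one, Nat.cast_zero, add_zero]
        simp only [add_assoc, add_comm (1 : ℝ), mul_comm]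
      rw [this, mul_inv, ← mul_assoc, mul_inv_cancel₀ ht.ne', one_mul]
    have hlast : (∏ j ∈ range (n + 1), (t + j))⁻¹ = (t + (n + 1)) * R⁻¹ := by
      have : R = (∏ j ∈ range (n + 1), (t + j)) * (t + (n + 1)) := by
        simp only [R, prod_range_succ _ (n + 1), Nat.cast_add, Nat.cast_one]
      rw [this, mul_inv, mul_comm, inv_mul_cancel_right₀ (by positivity)]
    rw [Function.iterate_succ_apply', fwdDiff, ih ht, ih (by positivity), hshift, hlast,
      Nat.factorial_succ]
    push_cast
    ring

theorem sum_choose_mul_neg_one_pow_mul_inv (n : ℕ) {t : ℝ} (ht : 0 < t) :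
    ∑ r ∈ range (n + 1), (n.choose r : ℝ) * (-1) ^ r * ((r : ℝ) + t)⁻¹ =
      n ! * (∏ j ∈ range (n + 1), (t + j))⁻¹ := by
  have hterm : ∀ k ∈ range (n + 1), (n.choose k : ℝ) * (-1) ^ k * ((k : ℝ) + t)⁻¹ =
      (-1) ^ n * (((-1 : ℤ) ^ (n - k) * n.choose k) • (t + k • (1 : ℝ))⁻¹) := by
    intro k hk
    obtain ⟨m, rfl⟩ := Nat.exists_eq_add_of_le (mem_range_succ_iff.mp hk)
    have hsq : ((-1 : ℝ) ^ m) * (-1) ^ m = 1 := by rw [← mul_pow]; norm_num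
    simp only [Nat.add_sub_cancel_left, zsmul_eq_mul, nsmul_eq_mul, mul_one, pow_add]
    push_cast
    linear_combination -(-1) ^ k * ((k + m).choose k : ℝ) * (k + t)⁻¹ * hsq
  have hsq : ((-1 : ℝ) ^ n) * (-1) ^ n = 1 := by rw [← mul_pow]; norm_num
  rw [sum_congr rfl hterm, ← mul_sum, ← fwdDiff_iter_eq_sum_shift, fwdDiff_iter_inv n ht]
  linear_combination (n ! : ℝ) * (∏ j ∈ range (n + 1), (t + j))⁻¹ * hsq

theorem prod_range_one_add (n : ℕ) : ∏ j ∈ range n, ((1 : ℝ) + j) = n ! := by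
  rw [← prod_range_add_one_eq_factorial]
  push_cast
  exact prod_congr rfl fun j _ => add_comm _ _

theorem prod_range_two_add (n : ℕ) : ∏ j ∈ range n, ((2 : ℝ) + j) = (n + 1)! := by
  rw [← prod_range_one_add, prod_range_succ']
  push_cast
  rw [add_zero, mul_one]
  exact prod_congr rfl fun j _ => by ring

theorem convexOn_inv_add (c : ℝ) : ConvexOn ℝ (Set.Ioi (-c)) (fun x => (x + c)⁻¹) := by
  have h := (convexOn_zpow (𝕜 := ℝ) (-1)).translate_right c
  rw [show (fun z => c + z) ⁻¹' Set.Ioi 0 = Set.Ioi (-c) by ext; simp [neg_lt_iff_pos_add']] at h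
  exact h.congr fun x _ => by simp [add_comm]

theorem antitoneOn_inv_add (c : ℝ) : AntitoneOn (fun x => (x + c)⁻¹) (Set.Ioi (-c)) :=
  fun x hx _ _ hxy => inv_anti₀ (neg_lt_iff_pos_add.mp hx) (by linarith)

noncomputable def pcArg (N : ℕ) (x : ℝ) : ℝ := (N + 2 * x) / (N + x)

noncomputable def pcClosed (N : ℕ) (t : ℝ) : ℝ := (N - 1)! * ∏ j ∈ range (N - 1), (t + j)⁻¹

theorem pcArg_mem_Ioo {N : ℕ} (hN : 0 < N) {x : ℝ} (hx : 0 < x) : pcArg N x ∈ Set.Ioo 1 2 := by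
  have hd : (0 : ℝ) < N + x := by positivity
  have : (0 : ℝ) < N := by exact_mod_cast hN
  constructor
  · rw [pcArg, lt_div_iff₀ hd]; linarith
  · rw [pcArg, div_lt_iff₀ hd]; linarith

theorem concaveOn_pcArg (N : ℕ) : ConcaveOn ℝ (Set.Ioi 0) (pcArg N) := by
  have hN : (0 : ℝ) ≤ N := N.cast_nonneg
  have hinv := (convexOn_inv_add (N : ℝ)).subset (Set.Ioi_subset_Ioi (by linarith)) (convex_Ioi 0)
  refine ((hinv.smul hN).neg.add_const 2).congr fun x (hx : 0 < x) => ?_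
  simp only [pcArg, Pi.add_apply, Pi.neg_apply, smul_eq_mul]
  field_simp
  ring

theorem gPc_eq_pcClosed {N : ℕ} (hN : 2 ≤ N) {x : ℝ} (hx : 0 ≤ x) :
    gPc N x = pcClosed N (pcArg N x) := by
  obtain ⟨m, rfl⟩ := Nat.exists_eq_add_of_le' hN
  rw [gPc, pcClosed, pcArg, show m + 2 - 1 = m + 1 by omega, show m + 2 - 2 = m by omega]
  have ht : 0 < (((m + 2 : ℕ) : ℝ) + 2 * x) / ((m + 2 : ℕ) + x) := by positivity
  have hP : 0 < ∏ j ∈ range (m + 1), ((((m + 2 : ℕ) : ℝ) + 2 * x) / ((m + 2 : ℕ) + x) + j) :=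
    prod_pos fun j _ => by positivity
  rw [sum_choose_mul_neg_one_pow_mul_inv m ht, sum_choose_mul_neg_one_pow_mul_inv m one_pos,
    prod_range_one_add, prod_inv_distrib, Nat.factorial_succ]
  push_cast
  field_simp

theorem convexOn_inv_add_natCast (j : ℕ) : ConvexOn ℝ (Set.Ioi 0) (fun t : ℝ => (t + j)⁻¹) :=
  (convexOn_inv_add j).subset (Set.Ioi_subset_Ioi (by simp)) (convex_Ioi 0)

theorem antitoneOn_inv_add_natCast (j : ℕ) : AntitoneOn (fun t : ℝ => (t + j)⁻¹) (Set.Ioi 0) :=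
  (antitoneOn_inv_add j).mono (Set.Ioi_subset_Ioi (by simp))

theorem antitoneOn_pcClosed (N : ℕ) : AntitoneOn (pcClosed N) (Set.Ioi 0) := fun a ha b hb hab =>
  mul_le_mul_of_nonneg_left (prod_le_prod (fun j _ => by simp only [Set.mem_Ioi] at hb; positivity)
    (fun j _ => antitoneOn_inv_add_natCast j ha hb hab)) (Nat.cast_nonneg _)

theorem convexOn_pcClosed (N : ℕ) : ConvexOn ℝ (Set.Ioi 0) (pcClosed N) := by
  have hprod := ConvexOn.prod_of_nonneg_of_antitoneOn (range (N - 1)) (convex_Ioi 0)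
    (fun j _ => convexOn_inv_add_natCast j) (fun j _ => antitoneOn_inv_add_natCast j)
    (fun j _ t (ht : 0 < t) => by positivity)
  exact (hprod.smul (by positivity : (0 : ℝ) ≤ (N - 1)!)).congr fun t _ => rfl

theorem pcClosed_one (N : ℕ) : pcClosed N 1 = 1 := by
  rw [pcClosed, prod_inv_distrib, prod_range_one_add, mul_inv_cancel₀ (by positivity)]

theorem pcClosed_two {N : ℕ} (hN : 0 < N) : pcClosed N 2 = 1 / N := by
  obtain ⟨n, rfl⟩ := Nat.exists_eq_add_of_le' hN
  rw [pcClosed, prod_inv_distrib, Nat.add_sub_cancel, prod_range_two_add, Nat.factorial_succ]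
  push_cast
  field_simp

theorem logb_one_add_div_eq {N : ℕ} {x : ℝ} (hx : 0 < x) :
    logb 2 (1 + N / x) = -Real.log (pcArg N x - 1) / Real.log 2 := by
  have h : 1 + N / x = (pcArg N x - 1)⁻¹ := by
    have hd : (N : ℝ) + x ≠ 0 := by positivity
    rw [pcArg, div_sub_one hd, inv_div, add_sub_add_left_eq_sub, two_mul, add_sub_cancel_right]
    field_simp
    ring
  rw [logb, h, Real.log_inv]

theorem fTwo_eq_neg_qaryEntropy {N : ℕ} (hN : N ≠ 1) (p : ℝ) :
    fTwo N p = -qaryEntropy N (1 - p) / Real.log 2 := by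
  have hN' : (N : ℝ) - 1 ≠ 0 := sub_ne_zero.2 (by exact_mod_cast hN)
  rcases eq_or_ne p 1 with rfl | hp
  · simp [fTwo, qaryEntropy]
  rw [fTwo, qaryEntropy, binEntropy_one_sub, binEntropy, logb, logb,
    Real.log_div (sub_ne_zero.2 hp.symm) hN', Real.log_inv, Real.log_inv]
  push_cast
  ring

theorem pcClosed_pcArg_mem_Icc {N : ℕ} (hN : 0 < N) {x : ℝ} (hx : 0 < x) :
    pcClosed N (pcArg N x) ∈ Set.Icc (1 / (N : ℝ)) 1 := by
  obtain ⟨h1, h2⟩ := pcArg_mem_Ioo hN hx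
  have hpos : pcArg N x ∈ Set.Ioi 0 := lt_trans one_pos h1
  constructor
  · simpa only [pcClosed_two hN] using
      antitoneOn_pcClosed N hpos (two_pos : (0 : ℝ) < 2) h2.le
  · simpa only [pcClosed_one] using
      antitoneOn_pcClosed N (one_pos : (0 : ℝ) < 1) hpos h1.le

theorem convexOn_rate {N : ℕ} (hN : 2 ≤ N) : ConvexOn ℝ (Set.Ioi 0) (Rate N) := by
  have hN0 : 0 < N := by omega
  have harg : Set.MapsTo (pcArg N) (Set.Ioi 0) (Set.Ioo 1 2) := fun x hx => pcArg_mem_Ioo hN0 hx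
  have hlog : ConvexOn ℝ (Set.Ioi 0) (fun x => -Real.log (pcArg N x - 1)) :=
    strictConcaveOn_log_Ioi.concaveOn.neg.comp_concaveOn_of_mapsTo
      ((concaveOn_pcArg N).sub (convexOn_const 1 (convex_Ioi 0))) strictMonoOn_log.monotoneOn.neg
      fun x hx => sub_pos.2 (harg hx).1
  have hpc : ConvexOn ℝ (Set.Ioi 0) (fun x => pcClosed N (pcArg N x)) :=
    (convexOn_pcClosed N).comp_concaveOn_of_mapsTo (concaveOn_pcArg N) (antitoneOn_pcClosed N)
      fun x hx => lt_trans one_pos (harg hx).1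
  have hent : ConvexOn ℝ (Set.Ioi 0) (fun x => -qaryEntropy N (1 - pcClosed N (pcArg N x))) := by
    refine (strictConcaveOn_qaryEntropy.concaveOn.neg.subset (Set.Icc_subset_Icc le_rfl ?_)
      (convex_Icc _ _)).comp_concaveOn_of_mapsTo ((concaveOn_const 1 (convex_Ioi 0)).sub hpc)
      (qaryEntropy_strictMonoOn hN).monotoneOn.neg fun x hx => ?_
    · exact sub_le_self 1 (by positivity)
    · obtain ⟨hlo, hhi⟩ := pcClosed_pcArg_mem_Icc hN0 hx
      exact ⟨sub_nonneg.2 hhi, sub_le_sub_left hlo 1⟩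
  refine (((hlog.add hent).smul (inv_nonneg.2 (Real.log_nonneg one_le_two))).add_const
    (logb 2 N)).congr fun x (hx : 0 < x) => ?_
  rw [Rate, logb_one_add_div_eq hx, fTwo_eq_neg_qaryEntropy (by omega), gPc_eq_pcClosed hN hx.le]
  simp only [Pi.add_apply, smul_eq_mul]
  ring

theorem rate_convex_and_jensen (N : ℕ) (hN : 2 ≤ N) :
    ConvexOn ℝ (Set.Ioi (0 : ℝ)) (Rate N) ∧
    ∀ (Ω : Type) (_ : MeasurableSpace Ω) (μ : Measure Ω), IsProbabilityMeasure μ →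
      ∀ X : Ω → ℝ, (∀ᵐ ω ∂μ, 0 < X ω) → Integrable X μ →
        Integrable (fun ω => Rate N (X ω)) μ →
        Rate N (∫ ω, X ω ∂μ) ≤ ∫ ω, Rate N (X ω) ∂μ := by
  refine ⟨convexOn_rate hN, fun Ω _ μ _ X hpos hXi hRi => ?_⟩
  refine (convexOn_rate hN).map_integral_le_of_integral_mem_interior hpos ?_ hXi hRi
  rw [interior_Ioi]
  exact integral_pos_of_ae_pos hpos hXi
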